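/- arXiv:1603.02093 — 3 statements merged into one kernel-verified Lean document; each statement's English description precedes it below -/
import Mathlib

section
/- Let M be an infinite two-generated commutative binoid group with generators x, y and minimal relation nx + my = 0 where d = gcd(n, m) ≥ 2. Then M is isomorphic to (ℤ × ℤ/dℤ)^∞; explicitly, writing n = ñd, m = m̃d and choosing r, s ∈ ℤ with sm̃ + rñ = 1, the map ix + jy ↦ (im̃ - jñ, ir + js mod d) is a group isomorphism from M \ {∞} to ℤ × ℤ/dℤ. -/
/-!
In a binoid group the elements other than `∞` are exactly the additive units, and sending `∞` to
`⊤` identifies `M` with `WithTop (AddUnits M)`. The unit group is generated by `x` and `y`, and the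
minimality of `(n, m)` among relations with positive coefficients forces every integer relation
to be a multiple of `(n, m)`. So `AddUnits M ≅ ℤ² / ℤ (ñ d, m̃ d)`, and the unimodular change of
coordinates given by `s m̃ + r ñ = 1` turns this quotient into `ℤ × ℤ/dℤ`.
-/
open Function

section TwoGenerated

variable {G : Type*} [AddCommGroup G] {X Y : G} {d : ℕ} {nt mt r s : ℤ}

theorem zsmul_add_zsmul_eq_zero_iff {n m : ℕ} (hn : 1 ≤ n) (hm : 1 ≤ m) (hrel : n • X + m • Y = 0)
    (hmin : ∀ p q : ℕ, 1 ≤ p → 1 ≤ q → p • X + q • Y = 0 → ∃ l : ℕ, p = l * n ∧ q = l * m)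
    (P Q : ℤ) : P • X + Q • Y = 0 ↔ ∃ k : ℤ, P = k * n ∧ Q = k * m := by
  have hrelZ : (n : ℤ) • X + (m : ℤ) • Y = 0 := by simpa only [natCast_zsmul] using hrel
  refine ⟨fun h => ?_, ?_⟩
  · -- adding `K` times the relation makes both coefficients positive
    set K : ℤ := |P| + |Q| + 1
    have hKn : K ≤ K * n := le_mul_of_one_le_right (by positivity) (by exact_mod_cast hn)
    have hKm : K ≤ K * m := le_mul_of_one_le_right (by positivity) (by exact_mod_cast hm)
    have hPK : 1 ≤ P + K * n := by linarith [neg_abs_le P, abs_nonneg Q]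
    have hQK : 1 ≤ Q + K * m := by linarith [neg_abs_le Q, abs_nonneg P]
    obtain ⟨p, hp⟩ := Int.eq_ofNat_of_zero_le (a := P + K * n) (by omega)
    obtain ⟨q, hq⟩ := Int.eq_ofNat_of_zero_le (a := Q + K * m) (by omega)
    have hpq : p • X + q • Y = 0 := by
      rw [← natCast_zsmul, ← natCast_zsmul, ← hp, ← hq]
      linear_combination (norm := module) h + K • hrelZ
    obtain ⟨l, rfl, rfl⟩ := hmin p q (by omega) (by omega) hpq
    exact ⟨l - K, by push_cast at hp; linarith, by push_cast at hq; linarith⟩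
  · rintro ⟨k, rfl, rfl⟩
    linear_combination (norm := module) k • hrelZ

variable (X Y d nt mt r s)

/-- Inverse to `(i, j) ↦ (i * mt - j * nt, i * r + j * s)`: when `s * mt + r * nt = 1`, the
matrix `[[mt, -nt], [r, s]]` has inverse `[[s, nt], [-r, mt]]`. -/
def presentationHom (hrel : (d : ℤ) • (nt • X + mt • Y) = 0) : ℤ × ZMod d →+ G :=
  (zmultiplesHom G (s • X - r • Y)).coprod (ZMod.lift d ⟨zmultiplesHom G (nt • X + mt • Y), hrel⟩)

variable {X Y d nt mt r s}

theorem presentationHom_apply_intCast (hrel : (d : ℤ) • (nt • X + mt • Y) = 0) (a b : ℤ) :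
    presentationHom X Y d nt mt r s hrel (a, (b : ZMod d)) =
      (s * a + nt * b) • X + (mt * b - r * a) • Y := by
  simp only [presentationHom, AddMonoidHom.coprod_apply, ZMod.lift_coe, zmultiplesHom_apply]
  module

theorem presentationHom_apply_coords (hrel : (d : ℤ) • (nt • X + mt • Y) = 0)
    (hbez : s * mt + r * nt = 1) (i j : ℤ) :
    presentationHom X Y d nt mt r s hrel (i * mt - j * nt, ((i * r + j * s : ℤ) : ZMod d)) =
      i • X + j • Y := by
  rw [presentationHom_apply_intCast]
  match_scalars
  · linear_combination i * hbez
  · linear_combination j * hbez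

theorem presentationHom_bijective (hrel : (d : ℤ) • (nt • X + mt • Y) = 0)
    (hspan : ∀ g : G, ∃ i j : ℤ, g = i • X + j • Y)
    (hker : ∀ P Q : ℤ, P • X + Q • Y = 0 → ∃ k : ℤ, P = k * (nt * d) ∧ Q = k * (mt * d))
    (hbez : s * mt + r * nt = 1) : Bijective (presentationHom X Y d nt mt r s hrel) := by
  refine ⟨(injective_iff_map_eq_zero _).2 ?_, fun g => ?_⟩
  · rintro ⟨a, c⟩ h
    rw [← ZMod.intCast_zmod_cast c, presentationHom_apply_intCast] at h
    obtain ⟨k, hk₁, hk₂⟩ := hker _ _ h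
    have ha : a = 0 := by linear_combination mt * hk₁ - nt * hk₂ - a * hbez
    have hc : (c.cast : ℤ) = k * d := by
      linear_combination r * hk₁ + s * hk₂ + (k * d - (c.cast : ℤ)) * hbez
    rw [ha, ← ZMod.intCast_zmod_cast c, hc]
    simp
  · obtain ⟨i, j, rfl⟩ := hspan g
    exact ⟨_, presentationHom_apply_coords hrel hbez i j⟩

end TwoGenerated

section Binoid

variable {M G : Type*} [AddCommMonoid M] [AddCommGroup G] {inf : M}

theorem zero_ne_of_add_absorbing [Nontrivial M] (habs : ∀ a : M, a + inf = inf) :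
    (0 : M) ≠ inf := by
  intro h
  obtain ⟨a, b, hab⟩ := exists_pair_ne M
  exact hab (by rw [← add_zero a, ← add_zero b, h, habs, habs])

theorem isAddUnit_iff_ne_of_add_absorbing (habs : ∀ a : M, a + inf = inf) (h0 : (0 : M) ≠ inf)
    (hgroup : ∀ a : M, a ≠ inf → ∃ b : M, a + b = 0) (a : M) : IsAddUnit a ↔ a ≠ inf := by
  refine ⟨?_, fun ha => ?_⟩
  · rintro ⟨u, rfl⟩ hu
    apply h0
    rw [← u.add_neg, hu, add_comm, habs]
  · obtain ⟨b, hb⟩ := hgroup a ha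
    exact .of_add_eq_zero b hb

variable (habs : ∀ a : M, a + inf = inf)

def withTopLift (φ : G →+ M) : WithTop G →+ M where
  toFun := WithTop.recTopCoe (C := fun _ => M) inf φ
  map_zero' := φ.map_zero'
  map_add' a b := by
    induction a using WithTop.recTopCoe <;> induction b using WithTop.recTopCoe <;>
      simp [← WithTop.coe_add, habs, add_comm inf]

@[simp] theorem withTopLift_top (φ : G →+ M) : withTopLift habs φ ⊤ = inf := rfl

@[simp] theorem withTopLift_coe (φ : G →+ M) (g : G) : withTopLift habs φ g = φ g := rfl

theorem withTopLift_bijective (hunit : ∀ a : M, IsAddUnit a ↔ a ≠ inf) (e : G ≃+ AddUnits M) :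
    Bijective (withTopLift habs ((AddUnits.coeHom M).comp e.toAddMonoidHom)) := by
  have hne (g : G) : (e g : M) ≠ inf := (hunit _).1 (e g).isAddUnit
  refine ⟨fun a b hab => ?_, fun a => ?_⟩
  · induction a using WithTop.recTopCoe <;> induction b using WithTop.recTopCoe <;>
      simp only [withTopLift_top, withTopLift_coe, AddMonoidHom.comp_apply,
        AddEquiv.coe_toAddMonoidHom, AddUnits.coeHom_apply] at hab
    · rfl
    · exact absurd hab.symm (hne _)
    · exact absurd hab (hne _)
    · rw [e.injective (AddUnits.ext hab)]
  · by_cases ha : a = inf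
    · exact ⟨⊤, ha.symm⟩
    · obtain ⟨u, rfl⟩ := (hunit a).2 ha
      exact ⟨e.symm u, by simp⟩

noncomputable def addEquivWithTopOfAddUnits (hunit : ∀ a : M, IsAddUnit a ↔ a ≠ inf)
    (e : G ≃+ AddUnits M) : M ≃+ WithTop G :=
  (AddEquiv.ofBijective _ (withTopLift_bijective habs hunit e)).symm

theorem addEquivWithTopOfAddUnits_inf (hunit : ∀ a : M, IsAddUnit a ↔ a ≠ inf)
    (e : G ≃+ AddUnits M) : addEquivWithTopOfAddUnits habs hunit e inf = ⊤ :=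
  (AddEquiv.symm_apply_eq _).2 rfl

theorem addEquivWithTopOfAddUnits_apply (hunit : ∀ a : M, IsAddUnit a ↔ a ≠ inf)
    (e : G ≃+ AddUnits M) (g : G) : addEquivWithTopOfAddUnits habs hunit e (e g) = g :=
  (AddEquiv.symm_apply_eq _).2 rfl

end Binoid

theorem stmt_9_general {M : Type*} [AddCommMonoid M] (inf : M)
    (habs : ∀ a : M, a + inf = inf) (x y : M)
    (hgen : ∀ a : M, a = inf ∨ ∃ i j : ℕ, a = i • x + j • y)
    (hgroup : ∀ a : M, a ≠ inf → ∃ b : M, a + b = 0)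
    (hinfinite : Infinite M)
    (n m d nt mt : ℕ) (r s : ℤ)
    (hn : 1 ≤ n) (hm : 1 ≤ m) (hrel : n • x + m • y = 0)
    (hminrel : ∀ r' s' : ℕ, 1 ≤ r' → 1 ≤ s' → r' • x + s' • y = 0 →
      ∃ l : ℕ, 1 ≤ l ∧ r' = l * n ∧ s' = l * m)
    (hnt : n = nt * d) (hmt : m = mt * d)
    (hbez : s * (mt : ℤ) + r * (nt : ℤ) = 1) :
    ∃ e : M ≃+ WithTop (ℤ × ZMod d), e inf = ⊤ ∧
      ∀ i j : ℕ, e (i • x + j • y) =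
        ((((i : ℤ) * (mt : ℤ) - (j : ℤ) * (nt : ℤ),
          (((i : ℤ) * r + (j : ℤ) * s : ℤ) : ZMod d)) : ℤ × ZMod d) : WithTop (ℤ × ZMod d)) := by
  have := hinfinite
  have hunit := isAddUnit_iff_ne_of_add_absorbing habs (zero_ne_of_add_absorbing habs) hgroup
  obtain ⟨hx, hy⟩ : IsAddUnit x ∧ IsAddUnit y := by
    have h : IsAddUnit (n • x + m • y) := hrel ▸ isAddUnit_zero
    rw [IsAddUnit.add_iff, isAddUnit_nsmul_iff (by omega), isAddUnit_nsmul_iff (by omega)] at h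
    exact h
  set X := hx.addUnit
  set Y := hy.addUnit
  have hval (i j : ℕ) : ((i • X + j • Y : AddUnits M) : M) = i • x + j • y := by simp [X, Y]
  have hspan (u : AddUnits M) : ∃ i j : ℤ, u = i • X + j • Y := by
    obtain h | ⟨i, j, hij⟩ := hgen u
    · exact absurd h ((hunit u).1 u.isAddUnit)
    · exact ⟨i, j, AddUnits.ext (by rw [natCast_zsmul, natCast_zsmul, hval, hij])⟩
  have hker := zsmul_add_zsmul_eq_zero_iff hn hm (AddUnits.ext ((hval n m).trans hrel))
    (fun p q hp hq h => (hminrel p q hp hq ((hval p q).symm.trans (congrArg _ h))).imp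
      fun _ hl => hl.2)
  push_cast [hnt, hmt] at hker
  have hrelU : (d : ℤ) • ((nt : ℤ) • X + (mt : ℤ) • Y) = 0 := by
    linear_combination (norm := module) (hker (nt * d) (mt * d)).2 ⟨1, by ring, by ring⟩
  let Θ := AddEquiv.ofBijective _
    (presentationHom_bijective hrelU hspan (fun P Q => (hker P Q).1) hbez)
  refine ⟨addEquivWithTopOfAddUnits habs hunit Θ, addEquivWithTopOfAddUnits_inf habs hunit Θ,
    fun i j => ?_⟩
  have hΘ := presentationHom_apply_coords hrelU hbez i j
  rw [natCast_zsmul, natCast_zsmul] at hΘ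
  rw [← hval, ← hΘ]
  exact addEquivWithTopOfAddUnits_apply habs hunit Θ _

/-- An infinite two-generated binoid group with generators `x`, `y` and minimal relation
`n • x + m • y = 0`, where `d = gcd(n, m) ≥ 2`, `n = ñd`, `m = m̃d` and `s·m̃ + r·ñ = 1`,
is isomorphic to `(ℤ × ℤ/dℤ)^∞` via `i • x + j • y ↦ (i·m̃ - j·ñ, i·r + j·s mod d)`. -/
theorem stmt_9 {M : Type*} [AddCommMonoid M] (inf : M)
    (habs : ∀ a : M, a + inf = inf) (x y : M)
    (hgen : ∀ a : M, a = inf ∨ ∃ i j : ℕ, a = i • x + j • y)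
    (hgroup : ∀ a : M, a ≠ inf → ∃ b : M, a + b = 0)
    (hinfinite : Infinite M)
    (n m d nt mt : ℕ) (r s : ℤ)
    (hn : 1 ≤ n) (hm : 1 ≤ m) (hrel : n • x + m • y = 0)
    (hminrel : ∀ r' s' : ℕ, 1 ≤ r' → 1 ≤ s' → r' • x + s' • y = 0 →
      ∃ l : ℕ, 1 ≤ l ∧ r' = l * n ∧ s' = l * m)
    (hd : d = Nat.gcd n m) (hd2 : 2 ≤ d)
    (hnt : n = nt * d) (hmt : m = mt * d)
    (hbez : s * (mt : ℤ) + r * (nt : ℤ) = 1) :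
    ∃ e : M ≃+ WithTop (ℤ × ZMod d), e inf = ⊤ ∧
      ∀ i j : ℕ, e (i • x + j • y) =
        ((((i : ℤ) * (mt : ℤ) - (j : ℤ) * (nt : ℤ),
          (((i : ℤ) * r + (j : ℤ) * s : ℤ) : ZMod d)) : ℤ × ZMod d) : WithTop (ℤ × ZMod d)) :=
  stmt_9_general inf habs x y hgen hgroup hinfinite n m d nt mt r s hn hm hrel hminrel hnt hmt hbez
end

section
/- A two-generated commutative binoid group is isomorphic to exactly one of: ℤ^∞; (ℤ × ℤ/dℤ)^∞ for some d ≥ 2; or (ℤ/kℤ × ℤ/lℤ)^∞ for k, l ≥ 2 with gcd(k, l) ≥ 2. -/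
/-!
In a binoid group `M` the elements other than `∞` are exactly the additive units, so
`M ≅ G^∞` for `G = AddUnits M`, and `G` is generated as a monoid by the units `x` and `y`.
Smith normal form of the kernel of `ℤ² → G` gives `G ≅ ℤ/a × ℤ/b`. Monoid generation by two
elements rules out `ℤ × ℤ`; not being monoid-generated by one element rules out every finite
cyclic group, i.e. a factor `ℤ/1` or coprime `a, b ≥ 2`. The three remaining cases are told
apart by torsion (`ℤ^∞` has none besides `0`) and by finiteness.
-/

open Function

namespace Module.Basis.SmithNormalForm

variable {R M ι : Type*} [CommRing R] [AddCommGroup M] [Module R M] {N : Submodule R M} {n : ℕ}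
  (snf : Basis.SmithNormalForm N ι n)

/-- Over `ℤ`, the coordinates outside the range of `snf.f` (coefficient `0`) give the free
factors `ZMod 0 = ℤ`. -/
noncomputable def diagCoeffs : ι → R := Function.extend snf.f snf.a 0

lemma diagCoeffs_apply_embedding (j : Fin n) : snf.diagCoeffs (snf.f j) = snf.a j :=
  snf.f.injective.extend_apply _ _ _

lemma diagCoeffs_smul_mem (i : ι) : snf.diagCoeffs i • snf.bM i ∈ N := by
  by_cases hi : ∃ j, snf.f j = i
  · obtain ⟨j, rfl⟩ := hi
    rw [diagCoeffs_apply_embedding, ← snf.snf]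
    exact (snf.bN j).2
  · simp [diagCoeffs, extend_apply' _ _ _ hi]

lemma mem_iff_forall_dvd_repr [Fintype ι] (x : M) :
    x ∈ N ↔ ∀ i, snf.diagCoeffs i ∣ snf.bM.repr x i := by
  refine ⟨fun hx i => ?_, fun h => ?_⟩
  · by_cases hi : ∃ j, snf.f j = i
    · obtain ⟨j, rfl⟩ := hi
      rw [diagCoeffs_apply_embedding, snf.repr_apply_embedding_eq_repr_smul ⟨x, hx⟩, map_smul,
        Finsupp.smul_apply, smul_eq_mul]
      exact dvd_mul_right _ _
    · rw [snf.repr_eq_zero_of_notMem_range ⟨x, hx⟩ (by simpa using hi)]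
      exact dvd_zero _
  · choose c hc using h
    rw [← snf.bM.sum_repr x]
    refine N.sum_mem fun i _ => ?_
    rw [hc i, mul_comm, mul_smul]
    exact N.smul_mem _ (snf.diagCoeffs_smul_mem i)

lemma map_equivFun_eq_pi [Fintype ι] :
    N.map (snf.bM.equivFun : M →ₗ[R] ι → R) =
      Submodule.pi Set.univ fun i => Ideal.span {snf.diagCoeffs i} := by
  ext v
  simp only [Submodule.mem_map_equiv, snf.mem_iff_forall_dvd_repr, ← Basis.equivFun_apply,
    LinearEquiv.apply_symm_apply, Submodule.mem_pi, Set.mem_univ, true_implies,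
    Ideal.mem_span_singleton]

noncomputable def quotientEquivPiSpan [Fintype ι] [DecidableEq ι] :
    (M ⧸ N) ≃ₗ[R] Π i, R ⧸ Ideal.span {snf.diagCoeffs i} :=
  (Submodule.Quotient.equiv N _ snf.bM.equivFun snf.map_equivFun_eq_pi).trans
    (Submodule.quotientPi _)

end Module.Basis.SmithNormalForm

lemma AddEquiv.closure_image_eq_top {G H : Type*} [AddMonoid G] [AddMonoid H] (e : G ≃+ H)
    {s : Set G} (hs : AddSubmonoid.closure s = ⊤) : AddSubmonoid.closure (e '' s) = ⊤ := by
  rw [← AddMonoidHom.map_mclosure, hs]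
  exact AddSubmonoid.map_equiv_top e

lemma ZMod.closure_one_eq_top (c : ℕ) [NeZero c] : AddSubmonoid.closure {(1 : ZMod c)} = ⊤ :=
  (AddSubmonoid.eq_top_iff' _).2 fun a => AddSubmonoid.mem_closure_singleton.2 ⟨a.val, by simp⟩

/-- `(a, b) ↦ a • x + b • y` would be a surjective, hence injective, endomorphism of `ℤ²`;
but `-(x + y) ∈ ℕ x + ℕ y` puts a vector with positive coordinates in its kernel. -/
lemma AddSubmonoid.closure_pair_ne_top_int_prod (x y : ℤ × ℤ) : closure {x, y} ≠ ⊤ := by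
  intro h
  let f : ℤ × ℤ →ₗ[ℤ] ℤ × ℤ :=
    (LinearMap.toSpanSingleton ℤ _ x).coprod (LinearMap.toSpanSingleton ℤ _ y)
  have hf : Surjective f := fun g => by
    obtain ⟨n, m, hg⟩ := (mem_closure_pair x y g).1 (h ▸ mem_top g)
    exact ⟨(n, m), by simp [f, ← hg]⟩
  obtain ⟨n, m, hnm⟩ := (mem_closure_pair x y (-(x + y))).1 (h ▸ mem_top _)
  have : f ((n : ℤ) + 1, (m : ℤ) + 1) = f 0 := by
    simp only [f, LinearMap.coprod_apply, LinearMap.toSpanSingleton_apply, map_zero]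
    rw [add_smul, add_smul, one_smul, one_smul, natCast_zsmul, natCast_zsmul,
      add_add_add_comm, hnm, neg_add_cancel]
  have := congrArg Prod.fst (OrzechProperty.injective_of_surjective_endomorphism f hf this)
  simp only [Prod.fst_zero] at this
  omega

namespace AddCommGroup

variable {G : Type*} [AddCommGroup G]

theorem exists_addEquiv_pi_zmod {ι : Type*} [Finite ι] (v : ι → G)
    (hv : Submodule.span ℤ (Set.range v) = ⊤) :
    ∃ a : ι → ℕ, Nonempty (G ≃+ Π i, ZMod (a i)) := by
  classical
  have := Fintype.ofFinite ι
  let φ := Fintype.linearCombination ℤ v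
  have hφ : Surjective φ := by
    rw [← LinearMap.range_eq_top, Fintype.range_linearCombination, hv]
  obtain ⟨n, snf⟩ := (LinearMap.ker φ).smithNormalForm (Pi.basisFun ℤ ι)
  exact ⟨_, ⟨(φ.quotKerEquivOfSurjective hφ).symm.toAddEquiv.trans <|
    snf.quotientEquivPiSpan.toAddEquiv.trans <|
      AddEquiv.piCongrRight fun i => (Int.quotientSpanEquivZMod _).toAddEquiv⟩⟩

theorem exists_addEquiv_zmod_prod_zmod (x y : G)
    (h : Submodule.span ℤ {x, y} = ⊤) :
    ∃ a b : ℕ, Nonempty (G ≃+ ZMod a × ZMod b) := by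
  obtain ⟨a, ⟨e⟩⟩ :=
    exists_addEquiv_pi_zmod ![x, y] (by simpa [Matrix.range_cons, Set.pair_comm] using h)
  exact ⟨a 0, a 1, ⟨e.trans (RingEquiv.piFinTwo fun i => ZMod (a i)).toAddEquiv⟩⟩

lemma eq_zero_of_addEquiv_zmod (hcyc : ∀ z : G, AddSubmonoid.closure {z} ≠ ⊤) {c : ℕ}
    (e : G ≃+ ZMod c) : c = 0 := by
  by_contra hc
  have := NeZero.mk hc
  exact hcyc _ (by simpa using e.symm.closure_image_eq_top (ZMod.closure_one_eq_top c))

theorem classification_of_closure_pair_eq_top {x y : G}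
    (hgen : AddSubmonoid.closure {x, y} = ⊤) (hcyc : ∀ z : G, AddSubmonoid.closure {z} ≠ ⊤) :
    Nonempty (G ≃+ ℤ) ∨ (∃ d, 2 ≤ d ∧ Nonempty (G ≃+ ℤ × ZMod d)) ∨
      ∃ k l, 2 ≤ k ∧ 2 ≤ l ∧ 2 ≤ Nat.gcd k l ∧ Nonempty (G ≃+ ZMod k × ZMod l) := by
  have hspan : Submodule.span ℤ {x, y} = ⊤ := eq_top_iff.2 fun g _ =>
    AddSubmonoid.closure_le (S := (Submodule.span ℤ {x, y}).toAddSubmonoid) |>.2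
      Submodule.subset_span (hgen ▸ AddSubmonoid.mem_top g)
  obtain ⟨a, b, ⟨e⟩⟩ := exists_addEquiv_zmod_prod_zmod x y hspan
  rcases Nat.lt_or_ge a 2 with ha | ha <;> rcases Nat.lt_or_ge b 2 with hb | hb
  · interval_cases a <;> interval_cases b
    · let e' : G ≃+ ℤ × ℤ := e
      refine absurd ?_ (AddSubmonoid.closure_pair_ne_top_int_prod (e' x) (e' y))
      rw [← Set.image_pair]
      exact e'.closure_image_eq_top hgen
    · exact .inl ⟨e.trans AddEquiv.prodUnique⟩
    · exact .inl ⟨e.trans AddEquiv.uniqueProd⟩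
    · exact absurd (eq_zero_of_addEquiv_zmod hcyc (e.trans AddEquiv.prodUnique)) one_ne_zero
  · interval_cases a
    · exact .inr <| .inl ⟨b, hb, ⟨e⟩⟩
    · exact absurd (eq_zero_of_addEquiv_zmod hcyc (e.trans AddEquiv.uniqueProd)) (by omega)
  · interval_cases b
    · exact .inr <| .inl ⟨a, ha, ⟨e.trans AddEquiv.prodComm⟩⟩
    · exact absurd (eq_zero_of_addEquiv_zmod hcyc (e.trans AddEquiv.prodUnique)) (by omega)
  · refine .inr <| .inr ⟨a, b, ha, hb, ?_, ⟨e⟩⟩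
    by_contra hab
    have hcop : Nat.Coprime a b := by
      have := Nat.gcd_pos_of_pos_left b (by omega : 0 < a)
      unfold Nat.Coprime
      omega
    exact Nat.mul_ne_zero (by omega) (by omega)
      (eq_zero_of_addEquiv_zmod hcyc (e.trans (ZMod.chineseRemainder hcop).symm.toAddEquiv))

end AddCommGroup

lemma WithTop.eq_zero_of_isOfFinAddOrder {A : Type*} [AddMonoid A] [IsAddTorsionFree A]
    {t : WithTop A} (ht : IsOfFinAddOrder t) : t = 0 := by
  induction t with
  | top =>
    obtain ⟨b, hb⟩ := ht.isAddUnit.exists_neg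
    simp at hb
  | coe a =>
    rw [← WithTop.coe_zero, WithTop.coe_inj, ← isOfFinAddOrder_iff_eq_zero]
    exact (WithTop.coe_injective.isOfFinAddOrder_iff (f := WithTop.addHom)).1 ht

lemma WithTop.isEmpty_addEquiv_of_isOfFinAddOrder {A B : Type*} [AddMonoid A]
    [IsAddTorsionFree A] [AddMonoid B] {b : B} (hb : IsOfFinAddOrder b) (hb0 : b ≠ 0) :
    IsEmpty (WithTop A ≃+ WithTop B) := by
  refine ⟨fun e => hb0 ?_⟩
  have := WithTop.eq_zero_of_isOfFinAddOrder (e.symm.toAddMonoidHom.isOfFinAddOrder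
    ((WithTop.addHom : B →+ WithTop B).isOfFinAddOrder hb))
  simpa using congrArg e this

section Binoid

variable {M : Type*} [AddCommMonoid M] {inf : M}

lemma nsmul_absorbing (habs : ∀ a : M, a + inf = inf) {n : ℕ} (hn : n ≠ 0) :
    n • inf = inf := by
  obtain ⟨k, rfl⟩ := Nat.exists_eq_succ_of_ne_zero hn
  rw [succ_nsmul, habs]

lemma zero_ne_absorbing (habs : ∀ a : M, a + inf = inf)
    (hnotone : ¬ ∃ z : M, ∀ a : M, a = inf ∨ ∃ n : ℕ, a = n • z) : (0 : M) ≠ inf := fun h0 =>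
  hnotone ⟨0, fun a => .inl (by rw [← add_zero a, h0, habs])⟩

lemma ne_absorbing_of_generators (habs : ∀ a : M, a + inf = inf) {x y : M}
    (hgen : ∀ a : M, a = inf ∨ ∃ n m : ℕ, a = n • x + m • y)
    (hnotone : ¬ ∃ z : M, ∀ a : M, a = inf ∨ ∃ n : ℕ, a = n • z) : x ≠ inf := by
  rintro rfl
  refine hnotone ⟨y, fun a => ?_⟩
  obtain ha | ⟨n, m, rfl⟩ := hgen a
  · exact .inl ha
  · rcases eq_or_ne n 0 with rfl | hn
    · exact .inr ⟨m, by rw [zero_nsmul, zero_add]⟩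
    · exact .inl (by rw [nsmul_absorbing habs hn, add_comm, habs])

def addUnitsWithTopHom (habs : ∀ a : M, a + inf = inf) : WithTop (AddUnits M) →+ M where
  toFun t := WithTop.recTopCoe inf (fun u => (u : M)) t
  map_zero' := rfl
  map_add' s t := by
    induction s with
    | top =>
      simp only [WithTop.top_add, WithTop.recTopCoe_top]
      rw [add_comm, habs]
    | coe u =>
      induction t with
      | top => simp [habs]
      | coe v => simp [← WithTop.coe_add]

lemma AddUnits.val_ne_of_absorbing (habs : ∀ a : M, a + inf = inf) (h0 : (0 : M) ≠ inf)
    (u : AddUnits M) : (u : M) ≠ inf := fun hu =>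
  h0 (by rw [← u.add_neg, hu, add_comm, habs])

lemma addUnitsWithTopHom_bijective (habs : ∀ a : M, a + inf = inf) (h0 : (0 : M) ≠ inf)
    (hunit : ∀ a : M, a ≠ inf → IsAddUnit a) : Bijective (addUnitsWithTopHom habs) := by
  refine ⟨fun s t hst => ?_, fun a => ?_⟩
  · induction s <;> induction t <;>
      simp only [addUnitsWithTopHom, AddMonoidHom.coe_mk, WithTop.top_ne_coe, WithTop.coe_ne_top,
        WithTop.coe_inj] at hst ⊢
    · exact AddUnits.val_ne_of_absorbing habs h0 _ hst.symm
    · exact AddUnits.val_ne_of_absorbing habs h0 _ hst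
    · exact AddUnits.ext hst
  · by_cases ha : a = inf
    · exact ⟨⊤, ha.symm⟩
    · exact ⟨(hunit a ha).addUnit, (hunit a ha).addUnit_spec⟩

noncomputable def addUnitsWithTopEquiv (habs : ∀ a : M, a + inf = inf) (h0 : (0 : M) ≠ inf)
    (hunit : ∀ a : M, a ≠ inf → IsAddUnit a) : M ≃+ WithTop (AddUnits M) :=
  (AddEquiv.ofBijective _ (addUnitsWithTopHom_bijective habs h0 hunit)).symm

lemma addUnitsWithTopEquiv_absorbing (habs : ∀ a : M, a + inf = inf) (h0 : (0 : M) ≠ inf)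
    (hunit : ∀ a : M, a ≠ inf → IsAddUnit a) : addUnitsWithTopEquiv habs h0 hunit inf = ⊤ :=
  (AddEquiv.symm_apply_eq _).2 rfl

lemma closure_addUnits_pair_eq_top (habs : ∀ a : M, a + inf = inf) (h0 : (0 : M) ≠ inf)
    {x y : M} (hgen : ∀ a : M, a = inf ∨ ∃ n m : ℕ, a = n • x + m • y)
    (hx : IsAddUnit x) (hy : IsAddUnit y) :
    AddSubmonoid.closure {hx.addUnit, hy.addUnit} = ⊤ := by
  refine (AddSubmonoid.eq_top_iff' _).2 fun u => ?_
  obtain hu | ⟨n, m, hu⟩ := hgen u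
  · exact absurd hu (AddUnits.val_ne_of_absorbing habs h0 u)
  · exact (AddSubmonoid.mem_closure_pair _ _ _).2 ⟨n, m, AddUnits.ext (by simp [hu])⟩

lemma closure_addUnits_singleton_ne_top (hunit : ∀ a : M, a ≠ inf → IsAddUnit a)
    (hnotone : ¬ ∃ z : M, ∀ a : M, a = inf ∨ ∃ n : ℕ, a = n • z) (z : AddUnits M) :
    AddSubmonoid.closure {z} ≠ ⊤ := fun hz => by
  refine hnotone ⟨z, fun a => or_iff_not_imp_left.2 fun ha => ?_⟩
  obtain ⟨n, hn⟩ :=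
    AddSubmonoid.mem_closure_singleton.1 (hz ▸ AddSubmonoid.mem_top (hunit a ha).addUnit)
  exact ⟨n, by rw [← (hunit a ha).addUnit_spec, ← hn, AddUnits.val_nsmul_eq_nsmul_val]⟩

end Binoid

/-- A two-generated commutative binoid group is isomorphic to exactly one of: `ℤ^∞`,
`(ℤ × ℤ/dℤ)^∞` for some `d ≥ 2`, or `(ℤ/kℤ × ℤ/lℤ)^∞` for `k, l ≥ 2` with `gcd(k,l) ≥ 2`. -/
theorem stmt_10 {M : Type*} [AddCommMonoid M] (inf : M)
    (habs : ∀ a : M, a + inf = inf) (x y : M)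
    (hgen : ∀ a : M, a = inf ∨ ∃ n m : ℕ, a = n • x + m • y)
    (hnotone : ¬ ∃ z : M, ∀ a : M, a = inf ∨ ∃ n : ℕ, a = n • z)
    (hgroup : ∀ a : M, a ≠ inf → ∃ b : M, a + b = 0) :
    ((∃ e : M ≃+ WithTop ℤ, e inf = ⊤) ∨
      (∃ d : ℕ, 2 ≤ d ∧ ∃ e : M ≃+ WithTop (ℤ × ZMod d), e inf = ⊤) ∨
      (∃ k l : ℕ, 2 ≤ k ∧ 2 ≤ l ∧ 2 ≤ Nat.gcd k l ∧
        ∃ e : M ≃+ WithTop (ZMod k × ZMod l), e inf = ⊤)) ∧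
    ¬((∃ e : M ≃+ WithTop ℤ, e inf = ⊤) ∧
        (∃ d : ℕ, 2 ≤ d ∧ ∃ e : M ≃+ WithTop (ℤ × ZMod d), e inf = ⊤)) ∧
    ¬((∃ e : M ≃+ WithTop ℤ, e inf = ⊤) ∧
        (∃ k l : ℕ, 2 ≤ k ∧ 2 ≤ l ∧ 2 ≤ Nat.gcd k l ∧
          ∃ e : M ≃+ WithTop (ZMod k × ZMod l), e inf = ⊤)) ∧
    ¬((∃ d : ℕ, 2 ≤ d ∧ ∃ e : M ≃+ WithTop (ℤ × ZMod d), e inf = ⊤) ∧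
        (∃ k l : ℕ, 2 ≤ k ∧ 2 ≤ l ∧ 2 ≤ Nat.gcd k l ∧
          ∃ e : M ≃+ WithTop (ZMod k × ZMod l), e inf = ⊤)) := by
  have hunit : ∀ a : M, a ≠ inf → IsAddUnit a := fun a ha =>
    isAddUnit_iff_exists_neg.2 (hgroup a ha)
  have h0 := zero_ne_absorbing habs hnotone
  have hx := hunit x (ne_absorbing_of_generators habs hgen hnotone)
  have hy := hunit y (ne_absorbing_of_generators habs (x := y) (y := x)
    (fun a => (hgen a).imp_right fun ⟨n, m, h⟩ => ⟨m, n, h.trans (add_comm _ _)⟩) hnotone)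
  have transport {H : Type} [AddCommGroup H] : Nonempty (AddUnits M ≃+ H) →
      ∃ e : M ≃+ WithTop H, e inf = ⊤ := fun ⟨e⟩ =>
    ⟨(addUnitsWithTopEquiv habs h0 hunit).trans e.withTopCongr,
      by simp [addUnitsWithTopEquiv_absorbing]⟩
  refine ⟨?_, ?_, ?_, ?_⟩
  · rcases AddCommGroup.classification_of_closure_pair_eq_top
      (closure_addUnits_pair_eq_top habs h0 hgen hx hy)
      (closure_addUnits_singleton_ne_top hunit hnotone)
      with h | ⟨d, hd, h⟩ | ⟨k, l, hk, hl, hkl, h⟩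
    · exact .inl (transport h)
    · exact .inr <| .inl ⟨d, hd, transport h⟩
    · exact .inr <| .inr ⟨k, l, hk, hl, hkl, transport h⟩
  · rintro ⟨⟨e₁, -⟩, d, hd, e₂, -⟩
    have : Fact (1 < d) := ⟨hd⟩
    have hb : IsOfFinAddOrder ((0, 1) : ℤ × ZMod d) :=
      (AddMonoidHom.inr ℤ (ZMod d)).isOfFinAddOrder (isOfFinAddOrder_of_finite 1)
    exact (WithTop.isEmpty_addEquiv_of_isOfFinAddOrder hb (by simp)).false (e₁.symm.trans e₂)
  · rintro ⟨⟨e₁, -⟩, k, l, hk, hl, -, e₂, -⟩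
    have : NeZero k := ⟨by omega⟩
    have : NeZero l := ⟨by omega⟩
    exact (Finite.of_equiv _ (e₁.symm.trans e₂).toEquiv.symm).false
  · rintro ⟨⟨d, -, e₁, -⟩, k, l, hk, hl, -, e₂, -⟩
    have : NeZero k := ⟨by omega⟩
    have : NeZero l := ⟨by omega⟩
    exact (Finite.of_equiv _ (e₁.symm.trans e₂).toEquiv.symm).false
end

section
/- Let M be a two-generated commutative binoid with generators x, y such that M is integral and not cancellative, but contains a non-trivial cancellative element. Then (exactly) one generator, say x, is cancellative, and the set of cancellative elements of M together with ∞ equals the subbinoid ⟨x⟩ generated by x. -/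
/-!
An element `c ≠ ∞` whose sum `c + d ≠ ∞` is cancellative is itself cancellative, because
integrality keeps `c + d + a` away from `∞` whenever `c + a` is. Writing the non-trivial
cancellative element as `n • x + m • y`, one of the generators therefore divides it and is
cancellative. Sums of cancellative elements are cancellative, so if both generators were,
every element `≠ ∞` would be, contradicting non-cancellativity. Finally, with `x` cancellative
and `y` not, any cancellative `n • x + m • y ≠ ∞` with `m ≠ 0` would make `y` cancellative.
-/

section Binoid

variable {M : Type*} [AddCommMonoid M] {inf : M}

def IsBinoidCancellative (inf c : M) : Prop :=
  ∀ a b : M, c + a = c + b → c + a ≠ inf → a = b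

theorem isBinoidCancellative_zero (inf : M) : IsBinoidCancellative inf (0 : M) := by
  intro a b h _
  simpa using h

theorem IsBinoidCancellative.add (habs : ∀ a : M, a + inf = inf) {c d : M}
    (hc : IsBinoidCancellative inf c) (hd : IsBinoidCancellative inf d) :
    IsBinoidCancellative inf (c + d) := by
  intro a b h hne
  rw [add_assoc, add_assoc] at h
  rw [add_assoc] at hne
  have hda : d + a ≠ inf := fun hda => hne (by rw [hda, habs])
  exact hd a b (hc _ _ h hne) hda

theorem IsBinoidCancellative.nsmul (habs : ∀ a : M, a + inf = inf) {c : M}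
    (hc : IsBinoidCancellative inf c) (n : ℕ) : IsBinoidCancellative inf (n • c) := by
  induction n with
  | zero => simpa using isBinoidCancellative_zero inf
  | succ k ih => simpa only [succ_nsmul] using ih.add habs hc

theorem IsBinoidCancellative.of_add (habs : ∀ a : M, a + inf = inf)
    (hint : ∀ a b : M, a + b = inf → a = inf ∨ b = inf) {c d : M}
    (h : IsBinoidCancellative inf (c + d)) (hne : c + d ≠ inf) :
    IsBinoidCancellative inf c := by
  intro a b hab habne
  refine h a b (by rw [add_right_comm, hab, add_right_comm]) fun hInf => ?_
  rw [add_right_comm] at hInf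
  rcases hint _ _ hInf with hca | hd
  · exact habne hca
  · exact hne (by rw [hd, habs])

variable {x y : M}

theorem not_isBinoidCancellative_and (habs : ∀ a : M, a + inf = inf)
    (hgen : ∀ a : M, a = inf ∨ ∃ n m : ℕ, a = n • x + m • y)
    (hnotcanc : ∃ a b c : M, a + c = b + c ∧ a + c ≠ inf ∧ a ≠ b) :
    ¬ (IsBinoidCancellative inf x ∧ IsBinoidCancellative inf y) := by
  rintro ⟨hx, hy⟩
  obtain ⟨a, b, d, hab, habne, hne⟩ := hnotcanc
  have hd : IsBinoidCancellative inf d := by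
    rcases hgen d with rfl | ⟨n, m, rfl⟩
    · exact absurd (habs a) habne
    · exact (hx.nsmul habs n).add habs (hy.nsmul habs m)
  rw [add_comm a, add_comm b] at hab
  rw [add_comm a] at habne
  exact hne (hd a b hab habne)

theorem isBinoidCancellative_left_or_right (habs : ∀ a : M, a + inf = inf)
    (hint : ∀ a b : M, a + b = inf → a = inf ∨ b = inf)
    (hgen : ∀ a : M, a = inf ∨ ∃ n m : ℕ, a = n • x + m • y) {c : M}
    (hc0 : c ≠ 0) (hcinf : c ≠ inf) (hc : IsBinoidCancellative inf c) :
    IsBinoidCancellative inf x ∨ IsBinoidCancellative inf y := by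
  rcases hgen c with h | ⟨n, m, rfl⟩
  · exact absurd h hcinf
  rcases n with _ | k
  · rcases m with _ | k
    · simp at hc0
    · have e : (0 : ℕ) • x + (k + 1) • y = y + k • y := by rw [succ_nsmul']; simp
      rw [e] at hc hcinf
      exact Or.inr (hc.of_add habs hint hcinf)
  · have e : (k + 1) • x + m • y = x + (k • x + m • y) := by rw [succ_nsmul']; abel
    rw [e] at hc hcinf
    exact Or.inl (hc.of_add habs hint hcinf)

theorem setOf_isBinoidCancellative_union_eq (habs : ∀ a : M, a + inf = inf)
    (hint : ∀ a b : M, a + b = inf → a = inf ∨ b = inf)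
    (hgen : ∀ a : M, a = inf ∨ ∃ n m : ℕ, a = n • x + m • y)
    (hx : IsBinoidCancellative inf x) (hy : ¬ IsBinoidCancellative inf y) :
    {c : M | IsBinoidCancellative inf c} ∪ {inf} = {a : M | (∃ n : ℕ, a = n • x) ∨ a = inf} := by
  ext c
  simp only [Set.mem_union, Set.mem_ofPred_eq, Set.mem_singleton_iff]
  constructor
  · rintro (hc | rfl)
    · rcases hgen c with hcinf | ⟨n, m, rfl⟩
      · exact Or.inr hcinf
      by_cases hinf : n • x + m • y = inf
      · exact Or.inr hinf
      rcases m with _ | k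
      · exact Or.inl ⟨n, by simp⟩
      · have e : n • x + (k + 1) • y = y + (n • x + k • y) := by rw [succ_nsmul']; abel
        rw [e] at hc hinf
        exact absurd (hc.of_add habs hint hinf) hy
    · exact Or.inr rfl
  · rintro (⟨n, rfl⟩ | rfl)
    · exact Or.inl (hx.nsmul habs n)
    · exact Or.inr rfl

end Binoid

/-- A two-generated integral non-cancellative commutative binoid containing a non-trivial
cancellative element has exactly one cancellative generator, and the cancellative elements
together with `∞` form the subbinoid generated by that generator. -/
theorem stmt_15 {M : Type*} [AddCommMonoid M] (inf : M)
    (habs : ∀ a : M, a + inf = inf) (x y : M)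
    (hgen : ∀ a : M, a = inf ∨ ∃ n m : ℕ, a = n • x + m • y)
    (hint : ∀ a b : M, a + b = inf → a = inf ∨ b = inf)
    (hnotcanc : ∃ a b c : M, a + c = b + c ∧ a + c ≠ inf ∧ a ≠ b)
    (hcancel : ∃ c : M, c ≠ 0 ∧ c ≠ inf ∧
      ∀ a b : M, c + a = c + b → c + a ≠ inf → a = b) :
    ((∀ a b : M, x + a = x + b → x + a ≠ inf → a = b) ∧
      ¬(∀ a b : M, y + a = y + b → y + a ≠ inf → a = b) ∧
      {c : M | ∀ a b : M, c + a = c + b → c + a ≠ inf → a = b} ∪ {inf}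
        = {a : M | (∃ n : ℕ, a = n • x) ∨ a = inf}) ∨
    ((∀ a b : M, y + a = y + b → y + a ≠ inf → a = b) ∧
      ¬(∀ a b : M, x + a = x + b → x + a ≠ inf → a = b) ∧
      {c : M | ∀ a b : M, c + a = c + b → c + a ≠ inf → a = b} ∪ {inf}
        = {a : M | (∃ n : ℕ, a = n • y) ∨ a = inf}) := by
  obtain ⟨c, hc0, hcinf, hc⟩ := hcancel
  have hnotboth := not_isBinoidCancellative_and habs hgen hnotcanc
  have hgen' : ∀ a : M, a = inf ∨ ∃ n m : ℕ, a = n • y + m • x := fun a =>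
    (hgen a).imp_right fun ⟨n, m, h⟩ => ⟨m, n, by rw [h, add_comm]⟩
  rcases isBinoidCancellative_left_or_right habs hint hgen hc0 hcinf hc with hx | hy
  · have hy : ¬ IsBinoidCancellative inf y := fun hy => hnotboth ⟨hx, hy⟩
    exact Or.inl ⟨hx, hy, setOf_isBinoidCancellative_union_eq habs hint hgen hx hy⟩
  · have hx : ¬ IsBinoidCancellative inf x := fun hx => hnotboth ⟨hx, hy⟩
    exact Or.inr ⟨hy, hx, setOf_isBinoidCancellative_union_eq habs hint hgen' hy hx⟩
end
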